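/- For all integers d ≥ 2 and all r > 0, the standard Gaussian measure of the ball of radius r centered at the origin in ℝ^d satisfies Q(B_{r,0}) < 4·d^{1/4}·r. -/

import Mathlib

/-!
The Gaussian density is at most `(2π)^(-d/2) ≤ 1`, and the ball of radius `r` has volume
`(r √π)^d / Γ(d/2 + 1) ≤ (2r)^d` once `d ≥ 2`, so `Q(B_{r,0}) ≤ min 1 ((2r)^d) ≤ 2r < 4 d^{1/4} r`.
-/

open MeasureTheory Metric Real

noncomputable section

abbrev E (d : ℕ) := EuclideanSpace ℝ (Fin d)

def stdGaussian (d : ℕ) : Measure (E d) :=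
  volume.withDensity (fun z => ENNReal.ofReal ((2 * π) ^ (-(d : ℝ) / 2) * Real.exp (-‖z‖ ^ 2 / 2)))

def tvDist {Ω : Type*} [MeasurableSpace Ω] (P Q : Measure Ω) : ℝ :=
  ⨆ A : {s : Set Ω // MeasurableSet s}, |(P A.1).toReal - (Q A.1).toReal|

section GaussianIntegral

variable {V : Type*} [NormedAddCommGroup V] [InnerProductSpace ℝ V] [FiniteDimensional ℝ V]
  [MeasurableSpace V] [BorelSpace V]

lemma integral_exp_neg_sq_norm_div_two :
    ∫ v : V, exp (-‖v‖ ^ 2 / 2) = (2 * π) ^ ((Module.finrank ℝ V : ℝ) / 2) := by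
  have h := GaussianFourier.integral_rexp_neg_mul_sq_norm (V := V) (b := 1 / 2) (by norm_num)
  rw [show π / (1 / 2) = 2 * π by ring] at h
  rw [← h]
  congr 1 with v
  ring_nf

lemma integrable_exp_neg_sq_norm_div_two : Integrable (fun v : V => exp (-‖v‖ ^ 2 / 2)) :=
  Integrable.of_integral_ne_zero (by rw [integral_exp_neg_sq_norm_div_two]; positivity)

end GaussianIntegral

instance (d : ℕ) : IsProbabilityMeasure (stdGaussian d) := by
  constructor
  rw [stdGaussian, withDensity_apply _ MeasurableSet.univ, Measure.restrict_univ,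
    ← ofReal_integral_eq_lintegral_ofReal (integrable_exp_neg_sq_norm_div_two.const_mul _)
      (Filter.Eventually.of_forall fun z => by positivity),
    integral_const_mul, integral_exp_neg_sq_norm_div_two, finrank_euclideanSpace_fin,
    ← rpow_add (by positivity), neg_div, neg_add_cancel, rpow_zero, ENNReal.ofReal_one]

lemma stdGaussian_le_volume (d : ℕ) (s : Set (E d)) : stdGaussian d s ≤ volume s := by
  calc stdGaussian d s
      = ∫⁻ z in s, ENNReal.ofReal ((2 * π) ^ (-(d : ℝ) / 2) * exp (-‖z‖ ^ 2 / 2)) :=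
        withDensity_apply' _ s
    _ ≤ ∫⁻ _ in s, 1 := by
        refine lintegral_mono fun z => ENNReal.ofReal_le_one.mpr ?_
        refine mul_le_one₀ (rpow_le_one_of_one_le_of_nonpos ?_ ?_) (exp_nonneg _) ?_
        · nlinarith [pi_gt_three]
        · have : (0 : ℝ) ≤ d := d.cast_nonneg
          linarith
        · exact exp_le_one_iff.mpr (by nlinarith [sq_nonneg ‖z‖])
    _ = volume s := by rw [setLIntegral_const, one_mul]

lemma volume_closedBall_le {d : ℕ} (hd : 2 ≤ d) {r : ℝ} (hr : 0 ≤ r) :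
    volume (closedBall (0 : E d) r) ≤ ENNReal.ofReal ((2 * r) ^ d) := by
  have : Nonempty (Fin d) := ⟨⟨0, by omega⟩⟩
  rw [EuclideanSpace.volume_closedBall, Fintype.card_fin, ← ENNReal.ofReal_pow hr,
    ← ENNReal.ofReal_mul (by positivity)]
  refine ENNReal.ofReal_le_ofReal ?_
  have hGamma : 1 ≤ Gamma (d / 2 + 1) := by
    have h2 : (2 : ℝ) ≤ d / 2 + 1 := by
      have : (2 : ℝ) ≤ d := by exact_mod_cast hd
      linarith
    calc (1 : ℝ) = Gamma 2 := Gamma_two.symm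
      _ ≤ Gamma (d / 2 + 1) := Gamma_strictMonoOn_Ici.monotoneOn (by simp) h2 h2
  have hsqrt_pi : √π ≤ 2 := sqrt_le_iff.mpr ⟨by norm_num, by linarith [pi_lt_four]⟩
  calc r ^ d * (√π ^ d / Gamma (d / 2 + 1))
      ≤ r ^ d * √π ^ d := by gcongr; exact div_le_self (by positivity) hGamma
    _ ≤ r ^ d * 2 ^ d := by gcongr
    _ = (2 * r) ^ d := by ring

lemma min_one_pow_le_self {x : ℝ} (hx : 0 ≤ x) {n : ℕ} (hn : n ≠ 0) : min 1 (x ^ n) ≤ x := by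
  rcases le_or_gt 1 x with h | h
  · exact (min_le_left _ _).trans h
  · exact (min_le_right _ _).trans (pow_le_of_le_one hx h.le hn)

theorem stmt19 (d : ℕ) (hd : 2 ≤ d) (r : ℝ) (hr : 0 < r) :
    (stdGaussian d (closedBall 0 r)).toReal < 4 * (d : ℝ) ^ ((1 : ℝ) / 4) * r := by
  have h_prob : (stdGaussian d (closedBall 0 r)).toReal ≤ 1 := measureReal_le_one
  have h_vol : (stdGaussian d (closedBall 0 r)).toReal ≤ (2 * r) ^ d :=
    ENNReal.toReal_le_of_le_ofReal (by positivity)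
      ((stdGaussian_le_volume d _).trans (volume_closedBall_le hd hr.le))
  have h_min : min 1 ((2 * r) ^ d) ≤ 2 * r := min_one_pow_le_self (by positivity) (by omega)
  have h_root : 1 ≤ (d : ℝ) ^ ((1 : ℝ) / 4) :=
    one_le_rpow (by exact_mod_cast (by omega : 1 ≤ d)) (by norm_num)
  calc (stdGaussian d (closedBall 0 r)).toReal
      ≤ min 1 ((2 * r) ^ d) := le_min h_prob h_vol
    _ ≤ 2 * r := h_min
    _ < 4 * r := by linarith
    _ ≤ 4 * (d : ℝ) ^ ((1 : ℝ) / 4) * r := by nlinarith
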